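/- arXiv:2405.10809 — 3 statements merged into one kernel-verified Lean document; each statement's English description precedes it below -/
import Mathlib

section
/- The map sending each generator e_{i,j} of the set partition monoid P_n to the element ē_{i,j} = (1/d) Σ_{k=0}^{d-1} z_i^k z_j^{-k} of C[(Z/dZ)^n] extends to a monoid homomorphism from P_n to the multiplicative monoid of C[(Z/dZ)^n]; that is, the elements ē_{i,j} satisfy the defining relations of P_n: ē_{i,j}^2 = ē_{i,j}; ē_{i,j} ē_{r,s} = ē_{r,s} ē_{i,j}; and ē_{i,j} ē_{i,k} = ē_{i,j} ē_{j,k} = ē_{i,k} ē_{j,k} for i < j < k. -/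
open scoped BigOperators

/-- The elements `ē_{i,j} = (1/d) ∑_{k=0}^{d-1} z_i^k z_j^{-k}` of the group
algebra ℂ[(ℤ/dℤ)^n] satisfy the defining relations of the set partition monoid `P_n`:
idempotency, pairwise commutation, and transitivity; hence `e_{i,j} ↦ ē_{i,j}` extends to
a monoid homomorphism from `P_n` to the multiplicative monoid of ℂ[(ℤ/dℤ)^n]. -/
theorem partition_relations_hold_for_bridges (d n : ℕ) (hd : 0 < d) :
    let G := Fin n → Multiplicative (ZMod d)
    let ζ : Fin n → G := fun a => Pi.mulSingle a (Multiplicative.ofAdd (1 : ZMod d))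
    let ebar : Fin n → Fin n → MonoidAlgebra ℂ G := fun a b =>
      (d : ℂ)⁻¹ • ∑ k ∈ Finset.range d, MonoidAlgebra.of ℂ G (ζ a ^ k * (ζ b)⁻¹ ^ k)
    (∀ i j : Fin n, i < j → ebar i j * ebar i j = ebar i j) ∧
    (∀ i j r s : Fin n, i < j → r < s → ebar i j * ebar r s = ebar r s * ebar i j) ∧
    (∀ i j k : Fin n, i < j → j < k →
      ebar i j * ebar i k = ebar i j * ebar j k ∧
      ebar i j * ebar j k = ebar i k * ebar j k) := by
  intro G ζ ebar
  haveI : NeZero d := ⟨hd.ne'⟩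
  have hdc : (d : ℂ) ≠ 0 := Nat.cast_ne_zero.mpr hd.ne'
  have hζd : ∀ a : Fin n, ζ a ^ d = 1 := by
    intro a
    show Pi.mulSingle a (Multiplicative.ofAdd (1 : ZMod d)) ^ d
        = (1 : Fin n → Multiplicative (ZMod d))
    rw [← Pi.mulSingle_pow]
    have h1 : (Multiplicative.ofAdd (1 : ZMod d)) ^ d = 1 := by
      rw [← ofAdd_nsmul]
      simp [nsmul_eq_mul, ZMod.natCast_self]
    rw [h1, Pi.mulSingle_one]
  set zp : Fin n → ZMod d → G := fun a x => ζ a ^ x.val with hzpdef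
  have zp_add : ∀ a x y, zp a (x + y) = zp a x * zp a y := by
    intro a x y
    have h := pow_eq_pow_mod (x.val + y.val) (hζd a)
    simp only [hzpdef, ZMod.val_add, ← h, pow_add]
  have zp_zero : ∀ a, zp a 0 = 1 := by
    intro a; simp [hzpdef, ZMod.val_zero]
  have zp_neg : ∀ a x, zp a (-x) = (zp a x)⁻¹ := by
    intro a x
    refine eq_inv_of_mul_eq_one_right ?_
    rw [← zp_add]
    simp [zp_zero]
  -- rewrite ebar as a sum over ZMod d
  have hebar : ∀ a b : Fin n, ebar a b =
      (d : ℂ)⁻¹ • ∑ x : ZMod d, MonoidAlgebra.of ℂ G (zp a x * zp b (-x)) := by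
    intro a b
    simp only [ebar]
    congr 1
    refine Finset.sum_nbij' (fun k => ((k : ℕ) : ZMod d)) (fun x => x.val)
      ?_ ?_ ?_ ?_ ?_
    · intro k hk; simp
    · intro x hx; simpa using x.val_lt
    · intro k hk
      exact ZMod.val_cast_of_lt (Finset.mem_range.mp hk)
    · intro x hx
      exact ZMod.natCast_rightInverse x
    · intro k hk
      rw [zp_neg]
      congr 2
      · simp [hzpdef, ZMod.val_cast_of_lt (Finset.mem_range.mp hk)]
      · rw [← inv_pow]
        simp [hzpdef, ZMod.val_cast_of_lt (Finset.mem_range.mp hk)]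
  -- general product formula
  have key : ∀ u v : ZMod d → G,
      ((d : ℂ)⁻¹ • ∑ x : ZMod d, MonoidAlgebra.of ℂ G (u x)) *
        ((d : ℂ)⁻¹ • ∑ y : ZMod d, MonoidAlgebra.of ℂ G (v y)) =
      ((d : ℂ)⁻¹ * (d : ℂ)⁻¹) •
        ∑ p : ZMod d × ZMod d, MonoidAlgebra.of ℂ G (u p.1 * v p.2) := by
    intro u v
    rw [smul_mul_smul_comm, Finset.sum_mul_sum, Fintype.sum_prod_type]
    simp_rw [map_mul]
  refine ⟨?_, ?_, ?_⟩
  · -- idempotency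
    intro i j _
    rw [hebar i j, key]
    have hw : ∀ x y : ZMod d,
        zp i x * zp j (-x) * (zp i y * zp j (-y)) = zp i (x + y) * zp j (-(x + y)) := by
      intro x y
      rw [mul_mul_mul_comm, ← zp_add, neg_add, ← zp_add]
    simp_rw [hw]
    rw [Fintype.sum_prod_type]
    have hin : ∀ x : ZMod d,
        (∑ y : ZMod d, MonoidAlgebra.of ℂ G (zp i (x + y) * zp j (-(x + y)))) =
        ∑ z : ZMod d, MonoidAlgebra.of ℂ G (zp i z * zp j (-z)) := by
      intro x
      exact Fintype.sum_equiv (Equiv.addLeft x) _ _ (fun y => rfl)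
    simp_rw [hin]
    rw [Finset.sum_const, Finset.card_univ, ZMod.card, ← Nat.cast_smul_eq_nsmul ℂ, smul_smul]
    congr 1
    field_simp
  · -- commutation: the group algebra of an abelian group is commutative
    intro i j r s _ _
    exact mul_comm _ _
  · -- transitivity
    intro i j k _ _
    set Tg : ZMod d × ZMod d × ZMod d → G :=
      fun t => zp i t.1 * zp j t.2.1 * zp k t.2.2 with hTg
    have habc : ∀ A A' B B' C C' : G,
        (A * A') * (B * B') * (C * C') = (A * B * C) * (A' * B' * C') := by
      intro A A' B B' C C'
      rw [mul_mul_mul_comm A A' B B', mul_mul_mul_comm (A * B) (A' * B') C C']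
    have hTg_add : ∀ s t, Tg (s + t) = Tg s * Tg t := by
      intro s t
      simp only [hTg, Prod.fst_add, Prod.snd_add, zp_add]
      exact habc _ _ _ _ _ _
    have hij : ∀ x : ZMod d, zp i x * zp j (-x) = Tg (x, -x, 0) := by
      intro x; simp [hTg, zp_zero]
    have hik : ∀ x : ZMod d, zp i x * zp k (-x) = Tg (x, 0, -x) := by
      intro x; simp [hTg, zp_zero]
    have hjk : ∀ x : ZMod d, zp j x * zp k (-x) = Tg (0, x, -x) := by
      intro x; simp [hTg, zp_zero]
    constructor
    · rw [hebar i j, hebar i k, hebar j k, key, key]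
      congr 1
      refine Fintype.sum_equiv
        (⟨fun p => (p.1 + p.2, p.2), fun q => (q.1 - q.2, q.2),
          fun p => by simp, fun q => by simp⟩ : ZMod d × ZMod d ≃ ZMod d × ZMod d) _ _ ?_
      intro p
      congr 1
      rw [hij, hik, hij, hjk, ← hTg_add, ← hTg_add]
      congr 1
      ext <;> simp <;> ring
    · rw [hebar i j, hebar j k, hebar i k, key, key]
      congr 1
      refine Fintype.sum_equiv
        (⟨fun p => (p.1, p.2 - p.1), fun q => (q.1, q.2 + q.1),
          fun p => by simp, fun q => by simp⟩ : ZMod d × ZMod d ≃ ZMod d × ZMod d) _ _ ?_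
      intro p
      congr 1
      rw [hij, hjk, hik, hjk, ← hTg_add, ← hTg_add]
      congr 1
      ext <;> simp <;> ring
end

section
/- In the group algebra C[S_{d,n}], for |i−j| = 1, the elements ē_i := (1/d) Σ_{k=0}^{d-1} z_i^k z_{i+1}^{-k} satisfy ē_i ē_j s_i = ē_j s_i ē_j = s_i ē_i ē_j. -/
open scoped BigOperators

/-- The action of the symmetric group on `(ℤ/dℤ)^n` permuting the coordinates. -/
def permAut (n d : ℕ) : Equiv.Perm (Fin n) →* MulAut (Fin n → Multiplicative (ZMod d)) where
  toFun σ :=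
    { toFun := fun f => f ∘ σ.symm
      invFun := fun f => f ∘ σ
      left_inv := fun f => by funext i; simp
      right_inv := fun f => by funext i; simp
      map_mul' := fun f g => rfl }
  map_one' := rfl
  map_mul' := fun σ τ => rfl

/-- The framed symmetric group `S_{d,n} = (ℤ/dℤ)^n ⋊ S_n` (here on `n+1` strands). -/
abbrev FramedSym (d n : ℕ) :=
  (Fin (n + 1) → Multiplicative (ZMod d)) ⋊[permAut (n + 1) d] Equiv.Perm (Fin (n + 1))

/-!
Write `ē_{ab} = d⁻¹ Σ_k z_a^k z_b^{-k}`, so that `ē_i = ē_{i,i+1}`. These elements lie in the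
commutative subalgebra spanned by the framings, and for any strands `a, b, c` the substitution
`l ↦ l + k` in the double sum gives `ē_{ab} ē_{bc} = ē_{ac} ē_{bc}`; with `ē_{ab} = ē_{ba}` this
makes all products of two of `ē_{ab}, ē_{bc}, ē_{ac}` equal. Conjugation by `s = (a b)` fixes
`ē_{ab}` and turns `ē_{bc}` into `ē_{ac}`, and both relations reduce to these product identities.
-/

theorem ZMod.sum_range_natCast {M : Type*} [AddCommMonoid M] (d : ℕ) [NeZero d]
    (f : ZMod d → M) : ∑ k ∈ Finset.range d, f k = ∑ x, f x :=
  Finset.sum_nbij' (↑) ZMod.val (by simp) (by simp [ZMod.val_lt])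
    (fun _ hk => ZMod.val_cast_of_lt (Finset.mem_range.1 hk)) (fun x _ => ZMod.natCast_zmod_val x)
    (fun _ _ => rfl)

theorem SemidirectProduct.inr_mul_inl {N G : Type*} [Group N] [Group G] {φ : G →* MulAut N}
    (g : G) (x : N) : (inr g * inl x : N ⋊[φ] G) = inl (φ g x) * inr g := by
  ext <;> simp

namespace MonoidAlgebra

variable {k G A : Type*} [Semiring k] [Monoid G] [Group A] [Fintype A]

theorem sum_of_mul_sum_of_monoidHom (f : A → G) (g : A →* G) :
    (∑ a, of k G (f a)) * ∑ a, of k G (g a) =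
      (∑ a, of k G (f a * g a)) * ∑ a, of k G (g a) := by
  simp only [Finset.sum_mul_sum, ← map_mul]
  refine Finset.sum_congr rfl fun a _ => ?_
  rw [← Equiv.sum_comp (Equiv.mulLeft a)]
  simp [mul_assoc]

end MonoidAlgebra

theorem tie_relations_of_conj {R : Type*} [Semiring R] {x y z t : R} (htx : t * x = x * t)
    (hty : t * y = z * t) (hxy : x * y = y * z) (hyz : y * z = x * z) :
    x * y * t = y * t * y ∧ y * t * y = t * x * y := by
  constructor
  · rw [mul_assoc y, hty, ← mul_assoc, hxy]
  · rw [mul_assoc y, hty, ← mul_assoc, hyz, mul_assoc, ← hty, ← mul_assoc, ← htx]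

namespace FramedSym

open Equiv

variable {d n : ℕ}

theorem permAut_mulSingle (σ : Equiv.Perm (Fin (n + 1))) (a : Fin (n + 1))
    (x : Multiplicative (ZMod d)) :
    permAut (n + 1) d σ (Pi.mulSingle a x) = Pi.mulSingle (σ a) x := by
  change Pi.mulSingle a x ∘ σ.symm = _
  rw [Pi.mulSingle_comp_equiv, Equiv.symm_symm]

/-- `k ↦ z_a^k z_b^{-k}`. -/
def framingDiff (d n : ℕ) (a b : Fin (n + 1)) : Multiplicative (ZMod d) →* FramedSym d n :=
  SemidirectProduct.inl.comp
    (MonoidHom.mulSingle (fun _ => Multiplicative (ZMod d)) a /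
      MonoidHom.mulSingle (fun _ => Multiplicative (ZMod d)) b)

theorem framingDiff_apply (a b : Fin (n + 1)) (x : Multiplicative (ZMod d)) :
    framingDiff d n a b x = SemidirectProduct.inl (Pi.mulSingle a x / Pi.mulSingle b x) := rfl

theorem framingDiff_ofAdd_natCast (a b : Fin (n + 1)) (k : ℕ) :
    framingDiff d n a b (Multiplicative.ofAdd k) =
      SemidirectProduct.inl (Pi.mulSingle a (Multiplicative.ofAdd 1)) ^ k *
        (SemidirectProduct.inl (Pi.mulSingle b (Multiplicative.ofAdd 1)))⁻¹ ^ k := by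
  rw [← nsmul_one, ofAdd_nsmul, map_pow, framingDiff_apply, map_div, div_eq_mul_inv,
    ((Commute.all _ _).map SemidirectProduct.inl).inv_right.mul_pow]

theorem framingDiff_swap (a b : Fin (n + 1)) (x : Multiplicative (ZMod d)) :
    framingDiff d n b a x = framingDiff d n a b x⁻¹ := by
  rw [framingDiff_apply, framingDiff_apply, Pi.mulSingle_inv, Pi.mulSingle_inv, inv_div_inv]

theorem framingDiff_mul_framingDiff (a b c : Fin (n + 1)) (x : Multiplicative (ZMod d)) :
    framingDiff d n a b x * framingDiff d n b c x = framingDiff d n a c x := by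
  rw [framingDiff_apply, framingDiff_apply, framingDiff_apply, ← map_mul, div_mul_div_cancel]

theorem inr_mul_framingDiff (σ : Equiv.Perm (Fin (n + 1))) (a b : Fin (n + 1))
    (x : Multiplicative (ZMod d)) : SemidirectProduct.inr σ * framingDiff d n a b x =
      framingDiff d n (σ a) (σ b) x * SemidirectProduct.inr σ := by
  rw [framingDiff_apply, framingDiff_apply, SemidirectProduct.inr_mul_inl, map_div,
    permAut_mulSingle, permAut_mulSingle]

theorem commute_framingDiff (a b a' b' : Fin (n + 1)) (x y : Multiplicative (ZMod d)) :
    Commute (framingDiff d n a b x) (framingDiff d n a' b' y) :=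
  (Commute.all _ _).map SemidirectProduct.inl

variable (R : Type*) [Semifield R] [NeZero d]

noncomputable def ebar (d n : ℕ) [NeZero d] (a b : Fin (n + 1)) :
    MonoidAlgebra R (FramedSym d n) :=
  (d : R)⁻¹ • ∑ x, MonoidAlgebra.of R _ (framingDiff d n a b x)

variable {R}

theorem ebar_eq_sum_range (a b : Fin (n + 1)) :
    ebar R d n a b = (d : R)⁻¹ • ∑ k ∈ Finset.range d, MonoidAlgebra.of R _
      (SemidirectProduct.inl (Pi.mulSingle a (Multiplicative.ofAdd 1)) ^ k *
        (SemidirectProduct.inl (Pi.mulSingle b (Multiplicative.ofAdd 1)))⁻¹ ^ k) := by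
  simp only [ebar, ← framingDiff_ofAdd_natCast,
    ZMod.sum_range_natCast d fun k => MonoidAlgebra.of R _ (framingDiff d n a b (.ofAdd k))]
  rw [Multiplicative.ofAdd.sum_comp fun x => MonoidAlgebra.of R _ (framingDiff d n a b x)]

theorem ebar_comm (a b : Fin (n + 1)) : ebar R d n a b = ebar R d n b a := by
  rw [ebar, ebar]
  congr 1
  exact Fintype.sum_equiv (Equiv.inv _) _ _ fun x => by
    rw [Equiv.inv_apply, framingDiff_swap]

theorem ebar_mul_ebar (a b c : Fin (n + 1)) :
    ebar R d n a b * ebar R d n b c = ebar R d n a c * ebar R d n b c := by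
  simp only [ebar, smul_mul_smul_comm]
  congr 1
  rw [MonoidAlgebra.sum_of_mul_sum_of_monoidHom]
  simp only [framingDiff_mul_framingDiff]

theorem commute_ebar (a b a' b' : Fin (n + 1)) :
    Commute (ebar R d n a b) (ebar R d n a' b') :=
  ((Commute.sum_left _ _ _ fun x _ => Commute.sum_right _ _ _ fun y _ =>
    (commute_framingDiff a b a' b' x y).map _).smul_left _).smul_right _

theorem of_inr_mul_ebar (σ : Equiv.Perm (Fin (n + 1))) (a b : Fin (n + 1)) :
    MonoidAlgebra.of R _ (SemidirectProduct.inr σ) * ebar R d n a b =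
      ebar R d n (σ a) (σ b) * MonoidAlgebra.of R _ (SemidirectProduct.inr σ) := by
  simp only [ebar, mul_smul_comm, smul_mul_assoc, Finset.mul_sum, Finset.sum_mul, ← map_mul,
    inr_mul_framingDiff]

theorem ebar_tie_relations {a b c : Fin (n + 1)} (hca : c ≠ a) (hcb : c ≠ b) :
    ebar R d n a b * ebar R d n b c * .of R _ (SemidirectProduct.inr (swap a b)) =
        ebar R d n b c * .of R _ (SemidirectProduct.inr (swap a b)) * ebar R d n b c ∧
      ebar R d n b c * .of R _ (SemidirectProduct.inr (swap a b)) * ebar R d n b c =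
        .of R _ (SemidirectProduct.inr (swap a b)) * ebar R d n a b * ebar R d n b c := by
  refine tie_relations_of_conj (z := ebar R d n a c) ?_ ?_ ?_ ?_
  · rw [of_inr_mul_ebar, swap_apply_left, swap_apply_right, ebar_comm]
  · rw [of_inr_mul_ebar, swap_apply_right, swap_apply_of_ne_of_ne hca hcb]
  · rw [ebar_mul_ebar, (commute_ebar _ _ _ _).eq]
  · rw [← ebar_mul_ebar b a c, ebar_comm b a]

end FramedSym

/-- In ℂ[S_{d,n}], for `|i−j| = 1` one has
`ē_i ē_j s_i = ē_j s_i ē_j = s_i ē_i ē_j`. -/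
theorem bridge_tie_relations (d n : ℕ) (hd : 0 < d) :
    let ζ : Fin (n + 1) → FramedSym d n := fun a =>
      SemidirectProduct.inl (Pi.mulSingle a (Multiplicative.ofAdd (1 : ZMod d)))
    let s : Fin n → MonoidAlgebra ℂ (FramedSym d n) := fun a =>
      MonoidAlgebra.of ℂ (FramedSym d n)
        (SemidirectProduct.inr (Equiv.swap a.castSucc a.succ))
    let ebar : Fin n → MonoidAlgebra ℂ (FramedSym d n) := fun a =>
      (d : ℂ)⁻¹ • ∑ k ∈ Finset.range d,
        MonoidAlgebra.of ℂ (FramedSym d n) (ζ a.castSucc ^ k * (ζ a.succ)⁻¹ ^ k)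
    ∀ i j : Fin n, (i.val + 1 = j.val ∨ j.val + 1 = i.val) →
      ebar i * ebar j * s i = ebar j * s i * ebar j ∧
      ebar j * s i * ebar j = s i * ebar i * ebar j := by
  have : NeZero d := ⟨hd.ne'⟩
  intro ζ s e i j hij
  have he (a : Fin n) : e a = FramedSym.ebar ℂ d n a.castSucc a.succ :=
    (FramedSym.ebar_eq_sum_range _ _).symm
  obtain ⟨a, b, c, hca, hcb, hi, hj, hs⟩ : ∃ a b c, c ≠ a ∧ c ≠ b ∧
      e i = FramedSym.ebar ℂ d n a b ∧ e j = FramedSym.ebar ℂ d n b c ∧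
      s i = MonoidAlgebra.of ℂ _ (SemidirectProduct.inr (Equiv.swap a b)) := by
    rcases hij with h | h
    · have hb : j.castSucc = i.succ := Fin.ext (by simp [← h])
      refine ⟨i.castSucc, i.succ, j.succ, ?_, ?_, he i, hb ▸ he j, rfl⟩ <;>
        (simp only [ne_eq, Fin.ext_iff, Fin.val_castSucc, Fin.val_succ]; omega)
    · have hb : j.succ = i.castSucc := Fin.ext (by simp [← h])
      refine ⟨i.succ, i.castSucc, j.castSucc, ?_, ?_, (he i).trans (FramedSym.ebar_comm _ _),
        (he j).trans (hb ▸ FramedSym.ebar_comm _ _), by rw [Equiv.swap_comm]⟩ <;>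
        (simp only [ne_eq, Fin.ext_iff, Fin.val_castSucc, Fin.val_succ]; omega)
  rw [hi, hj, hs]
  exact FramedSym.ebar_tie_relations hca hcb
end

section
/- In the extended framed Jones monoid algebra over K = C(α_1,…,α_{d−1}) (generators t_1,…,t_{n−1}, z_1,…,z_n with the framed Jones relations, where t_i z_i^k t_i = α_k t_i), for j = i+1 the bridge elements f̄_i := (1/d) Σ_{a} z_i^a t_i z_i^{−a} and ē_j := (1/d) Σ_b z_j^b z_{j+1}^{−b} satisfy f̄_i ē_{i+1} = ē_{i+1} t_i ē_{i+1}. -/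
open scoped BigOperators

lemma pow_mod_aux {A : Type*} [Ring A] {d : ℕ} {u : A} (hu : u ^ d = 1) (m : ℕ) :
    u ^ m = u ^ (m % d) := by
  conv_lhs => rw [← Nat.div_add_mod m d]
  rw [pow_add, pow_mul, hu, one_pow, one_mul]

lemma bridge_sums {A : Type*} [Ring A] (d : ℕ) (hd : 0 < d) (t x y w : A)
    (hyd : y ^ d = 1) (hwd : w ^ d = 1)
    (hyw : ∀ k l : ℕ, y ^ k * w ^ l = w ^ l * y ^ k)
    (hwt : ∀ k : ℕ, w ^ k * t = t * w ^ k)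
    (htx : ∀ k : ℕ, t * x ^ k = t * y ^ k)
    (hxt : ∀ k : ℕ, x ^ k * t = y ^ k * t) :
    (∑ a ∈ Finset.range d, x ^ a * t * x ^ (d - a)) *
        (∑ b ∈ Finset.range d, y ^ b * w ^ (d - b)) =
      (∑ b ∈ Finset.range d, y ^ b * w ^ (d - b)) * t *
        (∑ c ∈ Finset.range d, y ^ c * w ^ (d - c)) := by
  haveI : NeZero d := ⟨hd.ne'⟩
  have hYnat : ∀ m : ℕ, y ^ m = y ^ ((m : ZMod d)).val := by
    intro m; rw [ZMod.val_natCast]; exact pow_mod_aux hyd m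
  have hWnat : ∀ m : ℕ, w ^ m = w ^ ((m : ZMod d)).val := by
    intro m; rw [ZMod.val_natCast]; exact pow_mod_aux hwd m
  have hconv : ∀ g : ℕ → A, ∑ b ∈ Finset.range d, g b = ∑ p : ZMod d, g p.val := by
    intro g
    refine Finset.sum_nbij' (fun b => (b : ZMod d)) (fun p => p.val) ?_ ?_ ?_ ?_ ?_
    · intro a _; exact Finset.mem_univ _
    · intro p _; exact Finset.mem_range.mpr (ZMod.val_lt p)
    · intro a ha; exact ZMod.val_natCast_of_lt (Finset.mem_range.mp ha)
    · intro p _; exact ZMod.natCast_zmod_val p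
    · intro a ha; rw [ZMod.val_natCast_of_lt (Finset.mem_range.mp ha)]
  set F : ZMod d → ZMod d → A :=
    fun p q => y ^ p.val * t * (y ^ q.val * w ^ ((-(p + q)).val)) with hF
  have key1 :
      (∑ a ∈ Finset.range d, x ^ a * t * x ^ (d - a)) *
          (∑ b ∈ Finset.range d, y ^ b * w ^ (d - b)) = ∑ p : ZMod d, ∑ q : ZMod d, F p q := by
    rw [Finset.sum_mul_sum]
    rw [hconv fun a => ∑ b ∈ Finset.range d, x ^ a * t * x ^ (d - a) * (y ^ b * w ^ (d - b))]
    refine Finset.sum_congr rfl ?_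
    intro p _
    rw [hconv fun b => x ^ p.val * t * x ^ (d - p.val) * (y ^ b * w ^ (d - b))]
    refine Fintype.sum_equiv (Equiv.subRight p) _ _ ?_
    intro r
    simp only [hF, Equiv.subRight_apply]
    have hpr : p + (r - p) = r := by ring
    rw [hpr]
    have e1 : y ^ ((r - p).val) = y ^ (d - p.val) * y ^ r.val := by
      rw [← pow_add]
      conv_rhs => rw [hYnat (d - p.val + r.val)]
      congr 1
      push_cast [Nat.cast_sub (le_of_lt (ZMod.val_lt p)), ZMod.natCast_zmod_val,
        ZMod.natCast_self]
      ring
    have e2 : w ^ ((-r).val) = w ^ (d - r.val) := by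
      rw [hWnat (d - r.val)]
      congr 1
      push_cast [Nat.cast_sub (le_of_lt (ZMod.val_lt r)), ZMod.natCast_zmod_val,
        ZMod.natCast_self]
      ring
    rw [hxt, mul_assoc (y ^ p.val) t, htx, e1, e2]
    simp only [mul_assoc]
  have key2 :
      (∑ b ∈ Finset.range d, y ^ b * w ^ (d - b)) * t *
          (∑ c ∈ Finset.range d, y ^ c * w ^ (d - c)) = ∑ p : ZMod d, ∑ q : ZMod d, F p q := by
    rw [Finset.sum_mul, Finset.sum_mul_sum]
    rw [hconv fun b => ∑ c ∈ Finset.range d,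
      y ^ b * w ^ (d - b) * t * (y ^ c * w ^ (d - c))]
    refine Finset.sum_congr rfl ?_
    intro p _
    rw [hconv fun c => y ^ p.val * w ^ (d - p.val) * t * (y ^ c * w ^ (d - c))]
    refine Finset.sum_congr rfl ?_
    intro q _
    simp only [hF]
    have e3 : w ^ ((-(p + q)).val) = w ^ (d - p.val) * w ^ (d - q.val) := by
      rw [← pow_add, hWnat (d - p.val + (d - q.val))]
      congr 1
      push_cast [Nat.cast_sub (le_of_lt (ZMod.val_lt p)), Nat.cast_sub (le_of_lt (ZMod.val_lt q)),
        ZMod.natCast_zmod_val, ZMod.natCast_self]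
      ring
    rw [mul_assoc (y ^ p.val), hwt (d - p.val), e3]
    simp only [mul_assoc]
    congr 2
    rw [← mul_assoc, ← hyw, mul_assoc]
  rw [key1, key2]

/-- In the extended framed Jones monoid algebra over
`K = ℂ(α_1,…,α_{d−1})` (generators `t_1,…,t_{n−1}`, `z_1,…,z_n` with the framed Jones
relations and `t_i z_i^k t_i = α_k t_i`), for `j = i+1` the bridge elements
`f̄_i = (1/d) ∑_a z_i^a t_i z_i^{−a}` and `ē_j = (1/d) ∑_b z_j^b z_{j+1}^{−b}` satisfy
`f̄_i ē_{i+1} = ē_{i+1} t_i ē_{i+1}`.  (Since `z^d = 1`, negative powers `z^{−a}` are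
written `z^{d−a}`.) -/
theorem framed_jones_bridge_identity
    (K : Type*) [Field K] (A : Type*) [Ring A] [Algebra K A]
    (d n : ℕ) (hd : 0 < d) (hdK : (d : K) ≠ 0)
    (z : Fin (n + 1) → A) (t : Fin n → A) (α : ℕ → K) (hα0 : α 0 = 1)
    (hzcomm : ∀ a b, z a * z b = z b * z a)
    (hzd : ∀ a, z a ^ d = 1)
    (httfar : ∀ a b : Fin n, a.val + 1 < b.val → t a * t b = t b * t a)
    (httadj : ∀ a b : Fin n, a.val + 1 = b.val ∨ b.val + 1 = a.val →
      t a * t b * t a = t a)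
    (htz1 : ∀ a : Fin n, t a * z a.castSucc = t a * z a.succ)
    (htz2 : ∀ a : Fin n, z a.castSucc * t a = z a.succ * t a)
    (htz3 : ∀ (a : Fin n) (c : Fin (n + 1)), c ≠ a.castSucc → c ≠ a.succ →
      z c * t a = t a * z c)
    (htzt : ∀ (a : Fin n) (k : ℕ), k < d → t a * z a.castSucc ^ k * t a = α k • t a) :
    ∀ i j : Fin n, j.val = i.val + 1 →
      let fbar : A :=
        (d : K)⁻¹ • ∑ a ∈ Finset.range d, z i.castSucc ^ a * t i * z i.castSucc ^ (d - a)
      let ebar : A :=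
        (d : K)⁻¹ • ∑ b ∈ Finset.range d, z j.castSucc ^ b * z j.succ ^ (d - b)
      fbar * ebar = ebar * t i * ebar := by
  intro i j hij
  intro fbar ebar
  have hj : j.castSucc = i.succ := by
    apply Fin.ext; simp [hij]
  have hxyc : z i.castSucc * z i.succ = z i.succ * z i.castSucc := hzcomm _ _
  have htx : ∀ k : ℕ, t i * z i.castSucc ^ k = t i * z i.succ ^ k := by
    intro k
    induction k with
    | zero => simp
    | succ k ih =>
      calc t i * z i.castSucc ^ (k + 1)
          = (t i * z i.castSucc) * z i.castSucc ^ k := by rw [pow_succ', ← mul_assoc]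
        _ = (t i * z i.succ) * z i.castSucc ^ k := by rw [htz1 i]
        _ = t i * (z i.succ * z i.castSucc ^ k) := by rw [mul_assoc]
        _ = t i * (z i.castSucc ^ k * z i.succ) := by
            rw [((show Commute (z i.succ) (z i.castSucc) from hxyc.symm).pow_right k).eq]
        _ = (t i * z i.succ ^ k) * z i.succ := by rw [← mul_assoc, ih]
        _ = t i * z i.succ ^ (k + 1) := by rw [mul_assoc, ← pow_succ]
  have hxt : ∀ k : ℕ, z i.castSucc ^ k * t i = z i.succ ^ k * t i := by
    intro k
    induction k with
    | zero => simp
    | succ k ih =>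
      calc z i.castSucc ^ (k + 1) * t i
          = z i.castSucc * (z i.castSucc ^ k * t i) := by rw [pow_succ', mul_assoc]
        _ = z i.castSucc * (z i.succ ^ k * t i) := by rw [ih]
        _ = (z i.castSucc * z i.succ ^ k) * t i := by rw [mul_assoc]
        _ = (z i.succ ^ k * z i.castSucc) * t i := by
            rw [((show Commute (z i.castSucc) (z i.succ) from hxyc).pow_right k).eq]
        _ = z i.succ ^ k * (z i.succ * t i) := by rw [mul_assoc, htz2 i]
        _ = z i.succ ^ (k + 1) * t i := by rw [← mul_assoc, ← pow_succ]
  have hne1 : j.succ ≠ i.castSucc := by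
    simp only [ne_eq, Fin.ext_iff, Fin.val_succ, Fin.coe_castSucc, hij]; omega
  have hne2 : j.succ ≠ i.succ := by
    simp only [ne_eq, Fin.ext_iff, Fin.val_succ, hij]; omega
  have hwt0 : z j.succ * t i = t i * z j.succ := htz3 i j.succ hne1 hne2
  have hwt : ∀ k : ℕ, z j.succ ^ k * t i = t i * z j.succ ^ k := by
    intro k
    exact ((show Commute (z j.succ) (t i) from hwt0).pow_left k).eq
  have hyw : ∀ k l : ℕ, z i.succ ^ k * z j.succ ^ l = z j.succ ^ l * z i.succ ^ k := by
    intro k l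
    exact ((show Commute (z i.succ) (z j.succ) from hzcomm _ _).pow_pow k l).eq
  have hkey := bridge_sums d hd (t i) (z i.castSucc) (z i.succ) (z j.succ)
    (hzd i.succ) (hzd j.succ) hyw hwt htx hxt
  show fbar * ebar = ebar * t i * ebar
  simp only [fbar, ebar, hj]
  rw [smul_mul_smul_comm, smul_mul_assoc, smul_mul_smul_comm, hkey]
end
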